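/- Suppose S ⊆ {1, …, K} is such that Σ_{l∈S} P(M_l | C) > 0 and P(B | C ∩ M_l) = P(B | C) for every l ∉ S (the models outside S do not constrain the missing data B). Then the corrective likelihood satisfies P(B | C) = ( Σ_{l∈S} P(B | C ∩ M_l) · P(M_l | C) ) / ( Σ_{l∈S} P(M_l | C) ); i.e., the missing-data likelihood is the normalized model-average of the conditional likelihoods over the models that do constrain it. -/
import Mathlib


open MeasureTheory ProbabilityTheory

/-- If the models outside `S` do not constrain the missing data `B`
(`P(B | C ∩ M l) = P(B | C)` for `l ∉ S`) and `∑ l ∈ S, P(M l | C) > 0`, then the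
corrective likelihood is the normalized model-average of the conditional likelihoods
over the models in `S`:
`P(B | C) = (∑ l ∈ S, P(B | C ∩ M l) * P(M l | C)) / (∑ l ∈ S, P(M l | C))`. -/
theorem corrective_likelihood_normalized_average
    {Ω : Type*} [F : MeasurableSpace Ω] (μ : Measure Ω) [IsProbabilityMeasure μ]
    (B C : Set Ω) (hB : MeasurableSet B) (hC : MeasurableSet C) (hCpos : 0 < μ C)
    {K : ℕ} (M : Fin K → Set Ω) (hM : ∀ l, MeasurableSet (M l))
    (hdisj : Pairwise (Function.onFun Disjoint M))
    (hcover : μ (⋃ l, M l) = 1)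
    (hCM : ∀ l, 0 < μ (C ∩ M l))
    (S : Finset (Fin K))
    (hSpos : 0 < ∑ l ∈ S, μ[M l | C])
    (hout : ∀ l ∉ S, μ[B | C ∩ M l] = μ[B | C]) :
    μ[B | C] = (∑ l ∈ S, μ[B | C ∩ M l] * μ[M l | C]) / (∑ l ∈ S, μ[M l | C]) := by
  have hCne : μ C ≠ 0 := hCpos.ne'
  have hCfin : μ C ≠ ⊤ := (measure_lt_top μ C).ne
  have hCMne : ∀ l, μ (C ∩ M l) ≠ 0 := fun l => (hCM l).ne'
  have hCMfin : ∀ l, μ (C ∩ M l) ≠ ⊤ := fun l => (measure_lt_top μ _).ne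
  -- complement of union is null
  have hnull : μ (⋃ l, M l)ᶜ = 0 := by
    have := prob_compl_eq_one_sub (μ := μ) (MeasurableSet.iUnion hM)
    rw [this, hcover, tsub_self]
  -- term simplification
  have hterm : ∀ l, μ[B | C ∩ M l] * μ[M l | C] = (μ C)⁻¹ * μ ((C ∩ B) ∩ M l) := by
    intro l
    rw [cond_apply (hC.inter (hM l)) μ B, cond_apply hC μ (M l)]
    have h1 : (C ∩ M l) ∩ B = (C ∩ B) ∩ M l := by
      ext x; simp only [Set.mem_inter_iff]; tauto
    rw [h1, show (μ (C ∩ M l))⁻¹ * μ (C ∩ B ∩ M l) * ((μ C)⁻¹ * μ (C ∩ M l))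
        = (μ C)⁻¹ * μ (C ∩ B ∩ M l) * ((μ (C ∩ M l))⁻¹ * μ (C ∩ M l)) from by ring,
      ENNReal.inv_mul_cancel (hCMne l) (hCMfin l), mul_one]
  -- total probability over all models
  have htotal : ∑ l, μ[B | C ∩ M l] * μ[M l | C] = μ[B | C] := by
    simp_rw [hterm]
    rw [← Finset.mul_sum, cond_apply hC μ B]
    congr 1
    have hmeas := measure_iUnion (μ := μ)
      (fun i j hij => ((hdisj hij).mono Set.inter_subset_right Set.inter_subset_right))
      (fun l => (hC.inter hB).inter (hM l))
    rw [tsum_fintype] at hmeas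
    rw [← hmeas, ← Set.inter_iUnion, measure_inter_conull hnull]
  -- total conditional probability of models is one
  have hsum1 : ∑ l, μ[M l | C] = 1 := by
    have : ∀ l, μ[M l | C] = (μ C)⁻¹ * μ (C ∩ M l) := fun l => cond_apply hC μ (M l)
    simp_rw [this]
    rw [← Finset.mul_sum]
    have hmeas := measure_iUnion (μ := μ)
      (fun i j hij => ((hdisj hij).mono Set.inter_subset_right Set.inter_subset_right))
      (fun l => hC.inter (hM l))
    rw [tsum_fintype] at hmeas
    rw [← hmeas, ← Set.inter_iUnion, measure_inter_conull hnull,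
      ENNReal.inv_mul_cancel hCne hCfin]
  set P := μ[B | C] with hP
  set A := ∑ l ∈ S, μ[B | C ∩ M l] * μ[M l | C] with hA
  set s := ∑ l ∈ S, μ[M l | C] with hs
  set t := ∑ l ∈ Sᶜ, μ[M l | C] with ht
  have hst : s + t = 1 := by rw [hs, ht, Finset.sum_add_sum_compl]; exact hsum1
  have hsplit : A + ∑ l ∈ Sᶜ, μ[B | C ∩ M l] * μ[M l | C] = P := by
    rw [hA, Finset.sum_add_sum_compl]; exact htotal
  have hcompl : ∑ l ∈ Sᶜ, μ[B | C ∩ M l] * μ[M l | C] = P * t := by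
    rw [ht, Finset.mul_sum]
    refine Finset.sum_congr rfl fun l hl => ?_
    rw [hout l (Finset.mem_compl.mp hl)]
  have hPle : P ≤ 1 := by
    have : IsProbabilityMeasure (μ[|C]) := cond_isProbabilityMeasure hCne
    exact prob_le_one
  have htle : t ≤ 1 := by rw [← hst]; exact le_add_self
  have hPt : P * t ≠ ⊤ := by
    exact (lt_of_le_of_lt (mul_le_one' hPle htle) (by norm_num)).ne
  have hkey : s * P = A := by
    have h1 : P * s + P * t = A + P * t := by
      rw [← mul_add, hst, mul_one, ← hcompl]; exact hsplit.symm
    have := (ENNReal.add_left_inj hPt).mp h1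
    rw [mul_comm]; exact this
  have hs0 : s ≠ 0 := hSpos.ne'
  have hsfin : s ≠ ⊤ := (lt_of_le_of_lt (le_self_add.trans hst.le) ENNReal.one_lt_top).ne
  rw [ENNReal.eq_div_iff hs0 hsfin]
  exact hkey
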